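/- arXiv:2404.16760 — 4 statements merged into one kernel-verified Lean document; each statement's English description precedes it below -/
import Mathlib

section
/- Fix an integer m ≥ 1 and let X_m = {k/m : k = 0, 1, …, m} ⊆ ℝ. For j ∈ {0, 1, …, m} define g_j(x) := (x ⊕ (m−j)/m)^{⊙m} = max(0, m·min(1, x + (m−j)/m) − (m−1)) and h_j(x) := ((1−x) ⊕ j/m)^{⊙m} = max(0, m·min(1, (1−x) + j/m) − (m−1)). Then for every x ∈ X_m: g_j(x) = 1 if x ≥ j/m and g_j(x) = 0 if x < j/m; h_j(x) = 1 if x ≤ j/m and h_j(x) = 0 if x > j/m. Moreover, for 0 ≤ j ≤ k ≤ m and x ∈ X_m, g_j(x) ⊙ h_k(x) = 1 if j/m ≤ x ≤ k/m and g_j(x) ⊙ h_k(x) = 0 otherwise. -/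
def Xm (m : ℕ) : Set ℝ := {x | ∃ k : ℕ, k ≤ m ∧ x = (k:ℝ) / m}

noncomputable def odot (x y : ℝ) : ℝ := max 0 (x + y - 1)

noncomputable def gfun (m j : ℕ) (x : ℝ) : ℝ :=
  max 0 ((m:ℝ) * min 1 (x + ((m:ℝ) - (j:ℝ)) / m) - ((m:ℝ) - 1))

noncomputable def hfun (m j : ℕ) (x : ℝ) : ℝ :=
  max 0 ((m:ℝ) * min 1 ((1 - x) + (j:ℝ) / m) - ((m:ℝ) - 1))

/-!
On the grid `x = n / m` the argument of the `m`-fold `⊙`-power is `(n + m - j) / m`, and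
`(min 1 (a / m))^{⊙m} = max 0 (min 1 (a - m + 1))`. For `a = n + m - j` an integer this clamp
of `n - j + 1` to `[0, 1]` is exactly the indicator of `j ≤ n`; likewise `h_k` becomes the
indicator of `n ≤ k`, and `⊙` of two `{0, 1}`-values is their conjunction.
-/

lemma mul_min_one_div_sub (m a : ℝ) (hm : 0 < m) :
    m * min 1 (a / m) - (m - 1) = min 1 (a - m + 1) := by
  rw [mul_min_of_nonneg _ _ hm.le, mul_div_cancel₀ _ hm.ne', mul_one, ← min_sub_sub_right]
  ring_nf

lemma max_zero_min_one_intCast_add_one (d : ℤ) :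
    max 0 (min 1 ((d : ℝ) + 1)) = if 0 ≤ d then 1 else 0 := by
  split_ifs with hd
  · have : (0 : ℝ) ≤ d := by exact_mod_cast hd
    rw [min_eq_left (by linarith), max_eq_right zero_le_one]
  · have : (d : ℝ) + 1 ≤ 0 := by exact_mod_cast (show d + 1 ≤ 0 by omega)
    rw [min_eq_right (by linarith), max_eq_left this]

lemma gfun_natCast_div (m j n : ℕ) (hm : 0 < m) :
    gfun m j ((n : ℝ) / m) = if j ≤ n then 1 else 0 := by
  have hm' : (0 : ℝ) < m := by exact_mod_cast hm
  have hsum : (n : ℝ) / m + ((m : ℝ) - j) / m = ((n : ℝ) + m - j) / m := by ring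
  have hclamp : (n : ℝ) + m - j - m + 1 = ((n - j : ℤ) : ℝ) + 1 := by push_cast; ring
  rw [gfun, hsum, mul_min_one_div_sub _ _ hm', hclamp, max_zero_min_one_intCast_add_one]
  simp only [sub_nonneg, Nat.cast_le]

lemma hfun_natCast_div (m k n : ℕ) (hm : 0 < m) :
    hfun m k ((n : ℝ) / m) = if n ≤ k then 1 else 0 := by
  have hm' : (0 : ℝ) < m := by exact_mod_cast hm
  have hsum : 1 - (n : ℝ) / m + (k : ℝ) / m = ((m : ℝ) - n + k) / m := by field_simp
  have hclamp : (m : ℝ) - n + k - m + 1 = ((k - n : ℤ) : ℝ) + 1 := by push_cast; ring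
  rw [hfun, hsum, mul_min_one_div_sub _ _ hm', hclamp, max_zero_min_one_intCast_add_one]
  simp only [sub_nonneg, Nat.cast_le]

lemma odot_ite_one_zero (p q : Prop) [Decidable p] [Decidable q] :
    odot (if p then 1 else 0) (if q then 1 else 0) = if p ∧ q then 1 else 0 := by
  unfold odot
  split_ifs <;> simp_all

theorem indicator_functions (m : ℕ) (hm : 1 ≤ m) (x : ℝ) (hx : x ∈ Xm m) :
    (∀ j : ℕ, j ≤ m →
      ((j:ℝ)/m ≤ x → gfun m j x = 1) ∧ (x < (j:ℝ)/m → gfun m j x = 0) ∧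
      (x ≤ (j:ℝ)/m → hfun m j x = 1) ∧ ((j:ℝ)/m < x → hfun m j x = 0)) ∧
    (∀ j k : ℕ, j ≤ k → k ≤ m →
      (((j:ℝ)/m ≤ x ∧ x ≤ (k:ℝ)/m) → odot (gfun m j x) (hfun m k x) = 1) ∧
      (¬ ((j:ℝ)/m ≤ x ∧ x ≤ (k:ℝ)/m) → odot (gfun m j x) (hfun m k x) = 0)) := by
  obtain ⟨n, -, rfl⟩ := hx
  have hm' : (0 : ℝ) < m := by exact_mod_cast hm
  simp only [gfun_natCast_div m _ n hm, hfun_natCast_div m _ n hm, odot_ite_one_zero,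
    div_le_div_iff_of_pos_right hm', div_lt_div_iff_of_pos_right hm', Nat.cast_le, Nat.cast_lt]
  refine ⟨fun j _ => ⟨?_, ?_, ?_, ?_⟩, fun j k _ _ => ⟨?_, ?_⟩⟩ <;> intro h <;> simp [h]
end

section
/- Fix an integer m ≥ 1 and a natural number n, and let X_m = {k/m : k = 0, 1, …, m} ⊆ ℝ (note that X_m is closed under neg and ⊙). The smallest set S of functions from X_m^n to X_m that contains all constant functions and all coordinate projections, and is closed under the pointwise operations f ↦ neg∘f and (f, g) ↦ f ⊙ g (pointwise), is the set of ALL functions from X_m^n to X_m. -/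
/-!
Pass from `S` to the set `T` of real functions `v ↦ (g v : ℝ)`, `g ∈ S`. The MV-operations give
the truncated sum `min 1 (F + G)` and the distance `|F - G|`. Since values lie in `(1/m)ℤ`, the
truncated sum of `m` copies of `|F - G|` is the indicator of `F ≠ G`; the truncated sum of these over
the coordinates, against constants, is the indicator of `v ≠ a` for a point `a`. Finally every `f`
is the truncated sum over all points `a` of `(1 - [v ≠ a]) ⊙ f a`.
-/

open Finset

lemma zero_mem_Xm (m : ℕ) : (0 : ℝ) ∈ Xm m := ⟨0, m.zero_le, by simp⟩

lemma Xm_nonneg {m : ℕ} {x : ℝ} (hx : x ∈ Xm m) : 0 ≤ x := by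
  obtain ⟨k, -, rfl⟩ := hx
  positivity

lemma Xm_le_one {m : ℕ} {x : ℝ} (hx : x ∈ Xm m) : x ≤ 1 := by
  obtain ⟨k, hk, rfl⟩ := hx
  exact div_le_one_of_le₀ (by exact_mod_cast hk) m.cast_nonneg

lemma one_sub_mem_Xm {m : ℕ} (hm : 1 ≤ m) {x : ℝ} (hx : x ∈ Xm m) : 1 - x ∈ Xm m := by
  obtain ⟨k, hk, rfl⟩ := hx
  refine ⟨m - k, m.sub_le k, ?_⟩
  have : (m : ℝ) ≠ 0 := by positivity
  rw [Nat.cast_sub hk]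
  field_simp

lemma max_zero_add_sub_one_mem_Xm {m : ℕ} (hm : 1 ≤ m) {x y : ℝ} (hx : x ∈ Xm m)
    (hy : y ∈ Xm m) : max 0 (x + y - 1) ∈ Xm m := by
  obtain ⟨k, hk, rfl⟩ := hx
  obtain ⟨l, hl, rfl⟩ := hy
  have hm' : (0 : ℝ) < m := by positivity
  have hsum : (k : ℝ) / m + l / m - 1 = ((k + l : ℝ) - m) / m := by field_simp
  refine ⟨k + l - m, by omega, ?_⟩
  rw [hsum]
  rcases le_total (k + l) m with h | h
  · rw [Nat.sub_eq_zero_of_le h, max_eq_left (div_nonpos_of_nonpos_of_nonneg ?_ hm'.le)]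
    · simp
    · rw [sub_nonpos]; exact_mod_cast h
  · rw [Nat.cast_sub h, max_eq_right (div_nonneg ?_ hm'.le)]
    · push_cast; rfl
    · rw [sub_nonneg]; exact_mod_cast h

lemma Xm_finite (m : ℕ) : (Xm m).Finite :=
  ((Set.finite_Iic m).image fun k : ℕ => (k : ℝ) / m).subset fun _ ⟨k, hk, hx⟩ => ⟨k, hk, hx.symm⟩

lemma min_one_mul_abs_sub_of_mem_Xm {m : ℕ} {x y : ℝ} (hx : x ∈ Xm m) (hy : y ∈ Xm m) :
    min 1 (m * |x - y|) = if x = y then 0 else 1 := by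
  split_ifs with hxy
  · simp [hxy]
  obtain ⟨k, -, rfl⟩ := hx
  obtain ⟨l, -, rfl⟩ := hy
  have hm : (m : ℝ) ≠ 0 := fun hm => hxy (by simp [hm])
  have hkl : 1 ≤ |(k : ℝ) - l| := by
    have : (k : ℤ) - l ≠ 0 := sub_ne_zero.mpr (fun h => hxy (by rw [Nat.cast_inj.mp h]))
    exact_mod_cast Int.one_le_abs this
  have hscale : (m : ℝ) * |(k : ℝ) / m - l / m| = |(k : ℝ) - l| := by
    rw [← mul_div_cancel₀ ((k : ℝ) - l) hm, sub_div, abs_mul, Nat.abs_cast]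
  rw [hscale, min_eq_left hkl]

lemma min_one_sum_ite_eq {ι : Type*} (s : Finset ι) (p : ι → Prop) [DecidablePred p] :
    min 1 (∑ i ∈ s, if p i then (0 : ℝ) else 1) = if ∀ i ∈ s, p i then 0 else 1 := by
  split_ifs with h
  · simp [sum_eq_zero (fun i hi => if_pos (h i hi))]
  · push Not at h
    obtain ⟨i, hi, hpi⟩ := h
    refine min_eq_left ?_
    calc (1 : ℝ) = if p i then 0 else 1 := (if_neg hpi).symm
      _ ≤ _ := single_le_sum (f := fun j => if p j then (0 : ℝ) else 1)
        (fun j _ => by split_ifs <;> norm_num) hi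

structure IsMVClosed (m : ℕ) {α : Type*} (T : Set (α → ℝ)) : Prop where
  mem_Xm : ∀ F ∈ T, ∀ v, F v ∈ Xm m
  const_mem : ∀ c ∈ Xm m, (fun _ => c) ∈ T
  one_sub_mem : ∀ F ∈ T, (fun v => 1 - F v) ∈ T
  odot_mem : ∀ F ∈ T, ∀ G ∈ T, (fun v => max 0 (F v + G v - 1)) ∈ T

namespace IsMVClosed

variable {α : Type*} {m : ℕ} {T : Set (α → ℝ)}

theorem oplus_mem (hT : IsMVClosed m T) {F G : α → ℝ} (hF : F ∈ T) (hG : G ∈ T) :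
    (fun v => min 1 (F v + G v)) ∈ T := by
  convert hT.one_sub_mem _ (hT.odot_mem _ (hT.one_sub_mem _ hF) _ (hT.one_sub_mem _ hG))
    using 2 with v
  rw [← min_sub_sub_left]
  ring_nf

theorem min_one_sum_mem (hT : IsMVClosed m T) {ι : Type*} (s : Finset ι) {F : ι → α → ℝ}
    (hF : ∀ i ∈ s, F i ∈ T) : (fun v => min 1 (∑ i ∈ s, F i v)) ∈ T := by
  classical
  induction s using Finset.induction_on with
  | empty => simpa using hT.const_mem 0 (zero_mem_Xm m)
  | insert a s ha ih =>
    convert hT.oplus_mem (hF a (mem_insert_self a s))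
      (ih fun i hi => hF i (mem_insert_of_mem hi)) using 2 with v
    have hFa : 0 ≤ F a v := Xm_nonneg (hT.mem_Xm _ (hF a (mem_insert_self a s)) v)
    rw [sum_insert ha]
    rcases le_total (∑ i ∈ s, F i v) 1 with h | h
    · rw [min_eq_right h]
    · rw [min_eq_left h, min_eq_left (by linarith), min_eq_left (by linarith)]

theorem abs_sub_mem (hT : IsMVClosed m T) {F G : α → ℝ} (hF : F ∈ T) (hG : G ∈ T) :
    (fun v => |F v - G v|) ∈ T := by
  convert hT.oplus_mem (hT.odot_mem _ hF _ (hT.one_sub_mem _ hG))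
    (hT.odot_mem _ hG _ (hT.one_sub_mem _ hF)) using 2 with v
  have hF1 := Xm_le_one (hT.mem_Xm _ hF v)
  have hG1 := Xm_le_one (hT.mem_Xm _ hG v)
  have hF0 := Xm_nonneg (hT.mem_Xm _ hF v)
  have hG0 := Xm_nonneg (hT.mem_Xm _ hG v)
  rw [show F v + (1 - G v) - 1 = F v - G v by ring, show G v + (1 - F v) - 1 = -(F v - G v) by ring,
    max_comm 0, max_comm 0, max_zero_add_max_neg_zero_eq_abs_self, min_eq_right]
  rw [abs_le]
  constructor <;> linarith

theorem ite_eq_mem (hT : IsMVClosed m T) {F G : α → ℝ} (hF : F ∈ T) (hG : G ∈ T) :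
    (fun v => if F v = G v then (0 : ℝ) else 1) ∈ T := by
  convert hT.min_one_sum_mem (range m) (fun _ _ => hT.abs_sub_mem hF hG) using 2 with v
  rw [sum_const, card_range, nsmul_eq_mul,
    min_one_mul_abs_sub_of_mem_Xm (hT.mem_Xm _ hF v) (hT.mem_Xm _ hG v)]

theorem ite_forall_eq_mem (hT : IsMVClosed m T) {ι : Type*} [Fintype ι] {F G : ι → α → ℝ}
    (hF : ∀ i, F i ∈ T) (hG : ∀ i, G i ∈ T) :
    (fun v => if ∀ i, F i v = G i v then (0 : ℝ) else 1) ∈ T := by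
  convert hT.min_one_sum_mem univ (fun i _ => hT.ite_eq_mem (hF i) (hG i)) using 2 with v
  rw [min_one_sum_ite_eq]
  simp

theorem mem_of_forall_ite_eq_mem (hT : IsMVClosed m T) [Finite α] [DecidableEq α]
    (hδ : ∀ a, (fun v => if v = a then (0 : ℝ) else 1) ∈ T) {f : α → ℝ}
    (hf : ∀ v, f v ∈ Xm m) : f ∈ T := by
  have := Fintype.ofFinite α
  convert hT.min_one_sum_mem univ
    (fun a _ => hT.odot_mem _ (hT.one_sub_mem _ (hδ a)) _ (hT.const_mem _ (hf a))) using 2 with v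
  have hterm : ∀ a, max 0 (1 - (if v = a then 0 else 1) + f a - 1) = if v = a then f a else 0 := by
    intro a
    split_ifs
    · simpa using Xm_nonneg (hf a)
    · simpa using Xm_le_one (hf a)
  simp only [hterm, sum_ite_eq, mem_univ, if_true]
  exact (min_eq_right (Xm_le_one (hf v))).symm

end IsMVClosed

theorem representability (m n : ℕ) (hm : 1 ≤ m)
    (S : Set ((Fin n → Xm m) → Xm m))
    (hconst : ∀ c : Xm m, (fun _ => c) ∈ S)
    (hproj : ∀ i : Fin n, (fun v => v i) ∈ S)
    (hneg : ∀ f ∈ S, ∀ g : (Fin n → Xm m) → Xm m,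
      (∀ v, (g v : ℝ) = 1 - (f v : ℝ)) → g ∈ S)
    (hodot : ∀ f ∈ S, ∀ g ∈ S, ∀ h : (Fin n → Xm m) → Xm m,
      (∀ v, (h v : ℝ) = max 0 ((f v : ℝ) + (g v : ℝ) - 1)) → h ∈ S) :
    ∀ f : (Fin n → Xm m) → Xm m, f ∈ S := by
  classical
  have := (Xm_finite m).to_subtype
  set T : Set ((Fin n → Xm m) → ℝ) := (fun g v => (g v : ℝ)) '' S
  have hT : IsMVClosed m T :=
    { mem_Xm := by rintro _ ⟨g, -, rfl⟩ v; exact (g v).2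
      const_mem := fun c hc => ⟨fun _ => ⟨c, hc⟩, hconst _, rfl⟩
      one_sub_mem := by
        rintro _ ⟨g, hg, rfl⟩
        exact ⟨fun v => ⟨1 - g v, one_sub_mem_Xm hm (g v).2⟩, hneg g hg _ fun _ => rfl, rfl⟩
      odot_mem := by
        rintro _ ⟨g, hg, rfl⟩ _ ⟨g', hg', rfl⟩
        exact ⟨fun v => ⟨_, max_zero_add_sub_one_mem_Xm hm (g v).2 (g' v).2⟩,
          hodot g hg g' hg' _ fun _ => rfl, rfl⟩ }
  have hδ : ∀ a, (fun v => if v = a then (0 : ℝ) else 1) ∈ T := fun a => by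
    convert hT.ite_forall_eq_mem (F := fun i v => (v i : ℝ)) (G := fun i _ => (a i : ℝ))
      (fun i => ⟨_, hproj i, rfl⟩) (fun i => hT.const_mem _ (a i).2) using 3 with v
    simp [funext_iff, Subtype.ext_iff]
  intro f
  exact Subtype.val_injective.comp_left.mem_set_image.mp
    (hT.mem_of_forall_ite_eq_mem hδ fun v => (f v).2)
end

section
/- Let A and B be types, F : A → A, G : A × B → A × B, and U : A → B, and assume: (i) for all a ∈ A, the first component of G(a, U(a)) equals F(a); (ii) for all a ∈ A, the second component of G(a, U(a)) equals U(a); (iii) for all a ∈ A and b ∈ B, if the second component of G(a, b) equals b, then b = U(a). Then a point (a, b) ∈ A × B is a fixed point of G if and only if b = U(a) and a is a fixed point of F; consequently the map a ↦ (a, U(a)) is a bijection from the set of fixed points of F onto the set of fixed points of G, with inverse the projection onto the first coordinate. -/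
/-!
Hypothesis (iii) pins the second coordinate of any fixed point of `G` to `U a`, and on the graph of
`U` hypotheses (i) and (ii) say `G (a, U a) = (F a, U a)`. So the fixed points of `G` are exactly the
points `(a, U a)` with `F a = a`, and a set of the form `{(a, U a) | a ∈ s}` is in bijection with `s`
through the graph map of `U` and the first projection.
-/

namespace Set

variable {A B : Type*} {s : Set A} {t : Set (A × B)} {U : A → B}

theorem invOn_fst_graph_of_mem_iff (ht : ∀ a b, (a, b) ∈ t ↔ b = U a ∧ a ∈ s) :
    InvOn Prod.fst (fun a => (a, U a)) s t := by
  refine ⟨fun _ _ => rfl, ?_⟩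
  rintro ⟨a, b⟩ hab
  obtain ⟨rfl, -⟩ := (ht a b).mp hab
  rfl

theorem bijOn_graph_of_mem_iff (ht : ∀ a b, (a, b) ∈ t ↔ b = U a ∧ a ∈ s) :
    BijOn (fun a => (a, U a)) s t :=
  (invOn_fst_graph_of_mem_iff ht).bijOn (fun a ha => (ht a (U a)).mpr ⟨rfl, ha⟩)
    (fun ⟨a, b⟩ hab => ((ht a b).mp hab).2)

end Set

theorem apply_eq_self_iff_eq_and_isFixedPt {A B : Type*} {F : A → A} {G : A × B → A × B}
    {U : A → B} (h1 : ∀ a : A, (G (a, U a)).1 = F a) (h2 : ∀ a : A, (G (a, U a)).2 = U a)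
    (h3 : ∀ (a : A) (b : B), (G (a, b)).2 = b → b = U a) (a : A) (b : B) :
    G (a, b) = (a, b) ↔ b = U a ∧ F a = a := by
  constructor
  · intro h
    obtain rfl : b = U a := h3 a b (by rw [h])
    exact ⟨rfl, by rw [← h1 a, h]⟩
  · rintro ⟨rfl, hF⟩
    exact Prod.ext (by rw [h1 a, hF]) (h2 a)

theorem fixed_points_bijection {A B : Type*} (F : A → A) (G : A × B → A × B)
    (U : A → B)
    (h1 : ∀ a : A, (G (a, U a)).1 = F a)
    (h2 : ∀ a : A, (G (a, U a)).2 = U a)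
    (h3 : ∀ (a : A) (b : B), (G (a, b)).2 = b → b = U a) :
    (∀ (a : A) (b : B), G (a, b) = (a, b) ↔ b = U a ∧ F a = a) ∧
    Set.BijOn (fun a => (a, U a)) {a : A | F a = a} {z : A × B | G z = z} ∧
    Set.InvOn Prod.fst (fun a => (a, U a)) {a : A | F a = a} {z : A × B | G z = z} := by
  have hfix := apply_eq_self_iff_eq_and_isFixedPt h1 h2 h3
  exact ⟨hfix, Set.bijOn_graph_of_mem_iff hfix, Set.invOn_fst_graph_of_mem_iff hfix⟩
end

section
/- Let n ≥ 1, let L be a real n × n matrix and b ∈ ℝ^n, and define affine forms ℓ_i(x) = Σ_{j=1}^n L_{ij}·x_j + b_i and the map F : ℝ^n → ℝ^n by F(x)_i = max(0, ℓ_i(x)). Fix a subset I ⊆ {1, …, n} and let M_I be the square matrix indexed by I with entries (M_I)_{ij} = L_{ij} for i ≠ j and (M_I)_{ii} = L_{ii} − 1. If det(M_I) ≠ 0, then there is at most one x ∈ ℝ^n satisfying simultaneously: F(x) = x, ℓ_i(x) ≥ 0 for all i ∈ I, and ℓ_j(x) ≤ 0 for all j ∉ I. -/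
/-!
On the region `R_I` a fixed point `x` of `F` satisfies `x i = ℓ_i(x)` for `i ∈ I` and
`x i = 0` for `i ∉ I`. The difference `d` of two such fixed points is therefore supported on `I`
and satisfies `((L - 1) d)_i = 0` for `i ∈ I`; for vectors supported on `I` this says
`M_I d|_I = 0`, since `M_I` is the principal submatrix of `L - 1` on `I`. Hence `d = 0` when
`det M_I ≠ 0`.
-/

namespace Matrix

variable {ι R : Type*}

theorem of_ite_sub_one_eq_submatrix [DecidableEq ι] [Ring R] (L : Matrix ι ι R) (s : Finset ι) :
    Matrix.of (fun i j : s => if (i : ι) = (j : ι) then L i i - 1 else L i j) =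
      (L - 1).submatrix Subtype.val Subtype.val := by
  ext i j
  rw [of_apply, submatrix_apply, sub_apply]
  split_ifs with h
  · rw [h, one_apply_eq]
  · rw [one_apply_ne h, sub_zero]

theorem submatrix_val_mulVec_of_forall_notMem_eq_zero [Fintype ι] [NonUnitalNonAssocSemiring R]
    (A : Matrix ι ι R) {s : Finset ι} {v : ι → R} (hv : ∀ i ∉ s, v i = 0) :
    A.submatrix (Subtype.val : s → ι) Subtype.val *ᵥ (fun i : s => v i) =
      fun i : s => (A *ᵥ v) i := by
  ext i
  simp only [mulVec, dotProduct, submatrix_apply]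
  rw [Finset.sum_coe_sort s (fun j => A i j * v j)]
  exact Finset.sum_subset (Finset.subset_univ s) fun j _ hj => by rw [hv j hj, mul_zero]

theorem eq_zero_of_det_submatrix_ne_zero_of_mulVec_eq_zero_on [Fintype ι] [DecidableEq ι]
    [CommRing R] [NoZeroDivisors R] {A : Matrix ι ι R} {s : Finset ι}
    (hA : (A.submatrix (Subtype.val : s → ι) Subtype.val).det ≠ 0)
    {v : ι → R} (hv : ∀ i ∉ s, v i = 0) (hAv : ∀ i ∈ s, (A *ᵥ v) i = 0) : v = 0 := by
  have hrestrict : (fun i : s => v i) = 0 :=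
    eq_zero_of_mulVec_eq_zero hA <| by
      rw [submatrix_val_mulVec_of_forall_notMem_eq_zero A hv]
      exact funext fun i => hAv i i.2
  funext i
  by_cases hi : i ∈ s
  · exact congrFun hrestrict ⟨i, hi⟩
  · exact hv i hi

end Matrix

open Matrix

theorem sub_one_mulVec_apply_eq_neg_of_max_zero_eq {ι R : Type*} [Fintype ι] [DecidableEq ι]
    [Ring R] [LinearOrder R] {L : Matrix ι ι R} {b x : ι → R} {i : ι}
    (hfix : max 0 ((L *ᵥ x) i + b i) = x i)
    (hnonneg : 0 ≤ (L *ᵥ x) i + b i) : ((L - 1) *ᵥ x) i = -b i := by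
  rw [sub_mulVec, one_mulVec, Pi.sub_apply, ← hfix, max_eq_right hnonneg,
    sub_add_cancel_left]

theorem at_most_one_fixed_point_in_region_general (n : ℕ)
    (L : Matrix (Fin n) (Fin n) ℝ) (b : Fin n → ℝ) (I : Finset (Fin n))
    (hdet : (Matrix.of (fun i j : {i // i ∈ I} =>
      if (i : Fin n) = (j : Fin n) then L i i - 1 else L i j)).det ≠ 0) :
    ∀ x y : Fin n → ℝ,
      ((∀ i, max 0 (∑ j, L i j * x j + b i) = x i) ∧
       (∀ i ∈ I, 0 ≤ ∑ j, L i j * x j + b i) ∧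
       (∀ i ∉ I, ∑ j, L i j * x j + b i ≤ 0)) →
      ((∀ i, max 0 (∑ j, L i j * y j + b i) = y i) ∧
       (∀ i ∈ I, 0 ≤ ∑ j, L i j * y j + b i) ∧
       (∀ i ∉ I, ∑ j, L i j * y j + b i ≤ 0)) →
      x = y := by
  rintro x y ⟨hx, hxI, hxO⟩ ⟨hy, hyI, hyO⟩
  rw [of_ite_sub_one_eq_submatrix] at hdet
  refine sub_eq_zero.mp (eq_zero_of_det_submatrix_ne_zero_of_mulVec_eq_zero_on hdet ?_ ?_)
  · intro i hi
    rw [Pi.sub_apply, ← hx i, ← hy i, max_eq_left (hxO i hi), max_eq_left (hyO i hi), sub_zero]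
  · intro i hi
    rw [mulVec_sub, Pi.sub_apply,
      sub_one_mulVec_apply_eq_neg_of_max_zero_eq (hx i) (hxI i hi),
      sub_one_mulVec_apply_eq_neg_of_max_zero_eq (hy i) (hyI i hi), sub_self]

theorem at_most_one_fixed_point_in_region (n : ℕ) (hn : 1 ≤ n)
    (L : Matrix (Fin n) (Fin n) ℝ) (b : Fin n → ℝ) (I : Finset (Fin n))
    (hdet : (Matrix.of (fun i j : {i // i ∈ I} =>
      if (i : Fin n) = (j : Fin n) then L i i - 1 else L i j)).det ≠ 0) :
    ∀ x y : Fin n → ℝ,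
      ((∀ i, max 0 (∑ j, L i j * x j + b i) = x i) ∧
       (∀ i ∈ I, 0 ≤ ∑ j, L i j * x j + b i) ∧
       (∀ i ∉ I, ∑ j, L i j * x j + b i ≤ 0)) →
      ((∀ i, max 0 (∑ j, L i j * y j + b i) = y i) ∧
       (∀ i ∈ I, 0 ≤ ∑ j, L i j * y j + b i) ∧
       (∀ i ∉ I, ∑ j, L i j * y j + b i ≤ 0)) →
      x = y :=
  at_most_one_fixed_point_in_region_general n L b I hdet
end
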